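/- Let A be an n×n real matrix. Then there exists a vector y in the closed unit ball of ℝ^n such that |∏_{j=1}^n (Ay)_j| ≥ |det A| · n^{-n/2}, where (Ay)_j denotes the j-th coordinate of Ay. -/

import Mathlib

/-!
Orthonormalise the rows `a_j` of `A` by Gram–Schmidt: the resulting orthonormal basis `b`
satisfies `⟪b_i, a_j⟫ = 0` for `j < i`, hence `|det A| = ∏ j, |⟪b_j, a_j⟫|`. Take
`y = n^{-1/2} ∑ i, s_i b_i` with signs `s_i = ±1`, so that `‖y‖ ≤ 1` and
`(A y)_j = n^{-1/2} ∑_{i ≤ j} s_i ⟪b_i, a_j⟫`. Choosing `s_j` greedily, so that `s_j ⟪b_j, a_j⟫`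
has the sign of the partial sum over `i < j`, gives `|(A y)_j| ≥ n^{-1/2} |⟪b_j, a_j⟫|` for all `j`.
-/

open Finset
open scoped RealInnerProductSpace

lemma abs_le_abs_add_sign_mul (P d : ℝ) : |d| ≤ |P + (if 0 ≤ P * d then 1 else -1) * d| := by
  rw [← sq_le_sq]
  split_ifs <;> nlinarith

section GreedySigns

variable {ι : Type*} [LinearOrder ι] [LocallyFiniteOrderBot ι] [WellFoundedLT ι]

noncomputable def greedySigns (c : ι → ι → ℝ) : ι → ℝ :=
  WellFoundedLT.fix fun j s =>
    if 0 ≤ (∑ i ∈ (Iio j).attach, s i (mem_Iio.1 i.2) * c j i) * c j j then 1 else -1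

lemma greedySigns_eq (c : ι → ι → ℝ) (j : ι) :
    greedySigns c j = if 0 ≤ (∑ i ∈ Iio j, greedySigns c i * c j i) * c j j then 1 else -1 := by
  rw [← sum_attach (Iio j) fun i => greedySigns c i * c j i]
  conv_lhs => rw [greedySigns, WellFoundedLT.fix_eq]
  rfl

lemma greedySigns_sq (c : ι → ι → ℝ) (j : ι) : greedySigns c j ^ 2 = 1 := by
  rw [greedySigns_eq]; split_ifs <;> norm_num

lemma abs_le_abs_sum_greedySigns_mul (c : ι → ι → ℝ) (j : ι) :
    |c j j| ≤ |∑ i ∈ Iic j, greedySigns c i * c j i| := by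
  rw [← Iio_insert, sum_insert notMem_Iio_self, add_comm, greedySigns_eq c j]
  exact abs_le_abs_add_sign_mul _ _

end GreedySigns

theorem OrthonormalBasis.exists_norm_le_one_prod_abs_inner_ge {ι E : Type*} [Fintype ι]
    [LinearOrder ι] [LocallyFiniteOrderBot ι] [NormedAddCommGroup E] [InnerProductSpace ℝ E]
    (b : OrthonormalBasis ι ℝ E) (f : ι → E) (hf : ∀ {i j}, j < i → ⟪b i, f j⟫ = 0) :
    ∃ y : E, ‖y‖ ≤ 1 ∧
      (√(Fintype.card ι))⁻¹ ^ Fintype.card ι * ∏ i, |⟪b i, f i⟫| ≤ ∏ i, |⟪f i, y⟫| := by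
  set r := (√(Fintype.card ι))⁻¹
  have hr : 0 ≤ r := inv_nonneg.2 (Real.sqrt_nonneg _)
  let s := greedySigns fun j i => ⟪b i, f j⟫
  set y := b.repr.symm (WithLp.toLp 2 fun i => r * s i)
  have coord (j : ι) : ⟪f j, y⟫ = r * ∑ i ∈ Iic j, s i * ⟪b i, f j⟫ := by
    rw [← b.sum_inner_mul_inner, mul_sum, ← sum_subset (subset_univ (Iic j))]
    · refine sum_congr rfl fun i _ => ?_
      rw [← b.repr_apply_apply, LinearIsometryEquiv.apply_symm_apply, real_inner_comm]
      ring
    · intro i _ hi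
      rw [real_inner_comm, hf (not_le.1 (mem_Iic.not.1 hi)), zero_mul]
  refine ⟨y, ?_, ?_⟩
  · rw [LinearIsometryEquiv.norm_map, EuclideanSpace.norm_eq]
    refine Real.sqrt_le_one.2 ?_
    simp only [Real.norm_eq_abs, sq_abs, mul_pow, s, greedySigns_sq, mul_one, sum_const, card_univ,
      nsmul_eq_mul, r, inv_pow, Real.sq_sqrt (Nat.cast_nonneg _)]
    exact mul_inv_le_one
  · rw [← card_univ, ← prod_const, ← prod_mul_distrib]
    gcongr with j
    rw [coord, abs_mul, abs_of_nonneg hr]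
    exact mul_le_mul_of_nonneg_left (abs_le_abs_sum_greedySigns_mul (fun j i => ⟪b i, f j⟫) j) hr

lemma Module.Basis.det_mul_det_apply {R M ι : Type*} [CommRing R] [AddCommGroup M] [Module R M]
    [Fintype ι] [DecidableEq ι] (e b : Module.Basis ι R M) (f : ι → M) :
    e.det b * b.det f = e.det f := by
  rw [e.det_apply, e.det_apply, b.det_apply, ← Matrix.det_mul, Module.Basis.toMatrix_mul_toMatrix]

lemma OrthonormalBasis.abs_det_eq_prod_abs_inner_gramSchmidtOrthonormalBasis {ι E : Type*}
    [Fintype ι] [LinearOrder ι] [LocallyFiniteOrderBot ι] [DecidableEq ι]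
    [NormedAddCommGroup E] [InnerProductSpace ℝ E] [FiniteDimensional ℝ E]
    (e : OrthonormalBasis ι ℝ E) (h : Module.finrank ℝ E = Fintype.card ι) (f : ι → E) :
    |e.toBasis.det f| = ∏ i, |⟪InnerProductSpace.gramSchmidtOrthonormalBasis h f i, f i⟫| := by
  set b := InnerProductSpace.gramSchmidtOrthonormalBasis h f
  rw [← e.toBasis.det_mul_det_apply b.toBasis, abs_mul, ← Real.norm_eq_abs (e.toBasis.det _),
    b.coe_toBasis, e.det_to_matrix_orthonormalBasis b, one_mul,
    InnerProductSpace.gramSchmidtOrthonormalBasis_det, abs_prod]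

lemma Matrix.det_eq_basisFun_det_toLp {ι : Type*} [Fintype ι] [DecidableEq ι] (A : Matrix ι ι ℝ) :
    A.det = (EuclideanSpace.basisFun ι ℝ).toBasis.det fun j => WithLp.toLp 2 (A j) := by
  rw [Module.Basis.det_apply, ← Matrix.det_transpose]
  rfl

lemma Matrix.toEuclideanLin_apply_eq_inner {m n : Type*} [Fintype n] [DecidableEq n]
    (A : Matrix m n ℝ) (y : EuclideanSpace ℝ n) (j : m) :
    A.toEuclideanLin y j = ⟪WithLp.toLp 2 (A j), y⟫ := by
  simp [Matrix.toLpLin_apply, PiLp.inner_apply, Matrix.mulVec, dotProduct, mul_comm]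

lemma Real.rpow_neg_natCast_div_two {x : ℝ} (hx : 0 ≤ x) (n : ℕ) :
    x ^ (-(n : ℝ) / 2) = (√x)⁻¹ ^ n := by
  rw [Real.sqrt_eq_rpow, ← Real.rpow_neg hx, ← Real.rpow_natCast, ← Real.rpow_mul hx]
  ring_nf

/-- For any `n × n` real matrix `A` there is a vector `y` in the closed Euclidean unit ball
with `|∏ j, (A y) j| ≥ |det A| · n^{-n/2}`. -/
theorem stmt3 (n : ℕ) (A : Matrix (Fin n) (Fin n) ℝ) :
    ∃ y : EuclideanSpace ℝ (Fin n), ‖y‖ ≤ 1 ∧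
      |A.det| * (n : ℝ) ^ (-(n : ℝ) / 2) ≤ |∏ j, Matrix.toEuclideanLin A y j| := by
  let f : Fin n → EuclideanSpace ℝ (Fin n) := fun j => WithLp.toLp 2 (A j)
  have hdim : Module.finrank ℝ (EuclideanSpace ℝ (Fin n)) = Fintype.card (Fin n) := by simp
  let b := InnerProductSpace.gramSchmidtOrthonormalBasis hdim f
  obtain ⟨y, hy, hprod⟩ := b.exists_norm_le_one_prod_abs_inner_ge f
    (InnerProductSpace.gramSchmidtOrthonormalBasis_inv_triangular hdim f)
  refine ⟨y, hy, ?_⟩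
  rw [A.det_eq_basisFun_det_toLp,
    OrthonormalBasis.abs_det_eq_prod_abs_inner_gramSchmidtOrthonormalBasis _ hdim,
    Real.rpow_neg_natCast_div_two n.cast_nonneg, abs_prod, mul_comm]
  simpa only [Matrix.toEuclideanLin_apply_eq_inner, Fintype.card_fin] using hprod
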